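/- arXiv:1108.2498 — 10 statements merged into one kernel-verified Lean document; each statement's English description precedes it below -/
import Mathlib

section
/- Let f : [0,∞) → [0,1] be nonincreasing with f(0) = 1 and L = ∫_0^∞ f(t) dt < ∞. For every ε > 0 there exists a search plan x (e.g. the geometric plan x_0 = 0, x_k = A·2^{k-1} with A small) whose cost Σ_{k≥0} x_{k+1} f(x_k) is at most 4L + ε. -/
/-!
For the doubling plan `x k = A (2 ^ k - 1)` the gaps are `x (k + 1) - x k = A 2 ^ k`, so
`x (k + 2) ≤ 4 (x (k + 1) - x k)`. Since `f` is nonincreasing,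
`(x (k + 1) - x k) f (x (k + 1)) ≤ ∫_{x k}^{x (k + 1)} f`; hence every term of the cost except the
first is at most four times the integral of `f` over one interval of the plan, and these intervals
tile `[0, ∞)`. The first term is `x 1 f 0 = A`, which is taken to be `ε`.
-/

open MeasureTheory Filter

theorem AntitoneOn.sub_mul_le_intervalIntegral {f : ℝ → ℝ} {a b : ℝ}
    (hf : AntitoneOn f (Set.Icc a b)) (hab : a ≤ b) :
    (b - a) * f b ≤ ∫ t in a..b, f t := by
  rw [← Set.uIcc_of_le hab] at hf
  calc (b - a) * f b = ∫ _ in a..b, f b := by simp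
    _ ≤ ∫ t in a..b, f t :=
      intervalIntegral.integral_mono_on hab intervalIntegrable_const hf.intervalIntegrable
        fun t ht => hf (Set.uIcc_of_le hab ▸ ht) Set.right_mem_uIcc ht.2

theorem intervalIntegral_le_setIntegral_Ici {f : ℝ → ℝ} {a b : ℝ} (hab : a ≤ b)
    (hf : ∀ t ∈ Set.Ici a, 0 ≤ f t) (hint : IntegrableOn f (Set.Ici a)) :
    ∫ t in a..b, f t ≤ ∫ t in Set.Ici a, f t := by
  rw [intervalIntegral.integral_of_le hab]
  exact setIntegral_mono_set hint ((ae_restrict_iff' measurableSet_Ici).mpr (ae_of_all _ hf))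
    (Set.Ioc_subset_Ioi_self.trans Set.Ioi_subset_Ici_self).eventuallyLE

theorem sum_range_mul_le_of_add_two_le {f : ℝ → ℝ} {x : ℕ → ℝ} {c : ℝ}
    (hanti : AntitoneOn f (Set.Ici 0)) (hf : ∀ t ∈ Set.Ici (0:ℝ), 0 ≤ f t)
    (hint : IntegrableOn f (Set.Ici 0)) (hx0 : x 0 = 0) (hx : Monotone x) (hc : 0 ≤ c)
    (hgrowth : ∀ k, x (k + 2) ≤ c * (x (k + 1) - x k)) (n : ℕ) :
    ∑ k ∈ Finset.range n, x (k + 1) * f (x k) ≤ x 1 * f 0 + c * ∫ t in Set.Ici 0, f t := by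
  have hxnn (k : ℕ) : 0 ≤ x k := hx0 ▸ hx k.zero_le
  have hL : 0 ≤ ∫ t in Set.Ici (0:ℝ), f t := setIntegral_nonneg measurableSet_Ici hf
  have hfirst : 0 ≤ x 1 * f 0 := mul_nonneg (hxnn 1) (hf 0 Set.self_mem_Ici)
  cases n with
  | zero => simpa using add_nonneg hfirst (mul_nonneg hc hL)
  | succ m =>
    have hterm (k : ℕ) : x (k + 2) * f (x (k + 1)) ≤ c * ∫ t in x k..x (k + 1), f t := by
      have hle : x k ≤ x (k + 1) := hx k.le_succ
      calc x (k + 2) * f (x (k + 1)) ≤ c * (x (k + 1) - x k) * f (x (k + 1)) :=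
            mul_le_mul_of_nonneg_right (hgrowth k) (hf _ (hxnn _))
        _ ≤ c * ∫ t in x k..x (k + 1), f t := by
          rw [mul_assoc]
          exact mul_le_mul_of_nonneg_left ((hanti.mono fun t ht => (hxnn k).trans ht.1)
            |>.sub_mul_le_intervalIntegral hle) hc
    have hii (k : ℕ) : IntervalIntegrable f volume (x k) (x (k + 1)) :=
      (hint.mono_set fun t ht => (hxnn k).trans ((Set.uIcc_of_le (hx k.le_succ)) ▸ ht).1)
        |>.intervalIntegrable
    calc ∑ k ∈ Finset.range (m + 1), x (k + 1) * f (x k)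
        = x 1 * f 0 + ∑ k ∈ Finset.range m, x (k + 2) * f (x (k + 1)) := by
          rw [Finset.sum_range_succ', hx0, add_comm]
      _ ≤ x 1 * f 0 + c * ∫ t in x 0..x m, f t := by
          rw [← intervalIntegral.sum_integral_adjacent_intervals fun k _ => hii k, Finset.mul_sum]
          exact add_le_add le_rfl (Finset.sum_le_sum fun k _ => hterm k)
      _ ≤ x 1 * f 0 + c * ∫ t in Set.Ici 0, f t := by
          rw [hx0]
          gcongr
          exact intervalIntegral_le_setIntegral_Ici (hxnn m) hf hint

def geomPlan (A : ℝ) (k : ℕ) : ℝ := A * (2 ^ k - 1)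

section geomPlan

variable {A : ℝ}

@[simp] theorem geomPlan_zero (A : ℝ) : geomPlan A 0 = 0 := by simp [geomPlan]

@[simp] theorem geomPlan_one (A : ℝ) : geomPlan A 1 = A := by norm_num [geomPlan]

theorem geomPlan_strictMono (hA : 0 < A) : StrictMono (geomPlan A) := fun _ _ hab =>
  mul_lt_mul_of_pos_left (sub_lt_sub_right (pow_lt_pow_right₀ one_lt_two hab) 1) hA

theorem geomPlan_nonneg (hA : 0 < A) (k : ℕ) : 0 ≤ geomPlan A k :=
  geomPlan_zero A ▸ (geomPlan_strictMono hA).monotone k.zero_le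

theorem tendsto_geomPlan_atTop (hA : 0 < A) : Tendsto (geomPlan A) atTop atTop :=
  (tendsto_atTop_add_const_right _ (-1 : ℝ)
    (tendsto_pow_atTop_atTop_of_one_lt one_lt_two)).const_mul_atTop hA
    |>.congr fun k => by simp [geomPlan, sub_eq_add_neg]

theorem geomPlan_add_two_le (hA : 0 ≤ A) (k : ℕ) :
    geomPlan A (k + 2) ≤ 4 * (geomPlan A (k + 1) - geomPlan A k) := by
  have : geomPlan A (k + 2) = 4 * (geomPlan A (k + 1) - geomPlan A k) - A := by
    simp only [geomPlan]; ring
  linarith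

end geomPlan

/-- For every ε > 0 there is a search plan of cost at most 4L + ε,
where L = ∫_0^∞ f(t) dt. -/
theorem stmt2 (f : ℝ → ℝ) (hanti : AntitoneOn f (Set.Ici 0))
    (hf0 : f 0 = 1) (hbd : ∀ t ∈ Set.Ici (0:ℝ), 0 ≤ f t ∧ f t ≤ 1)
    (hint : IntegrableOn f (Set.Ici 0)) :
    ∀ ε : ℝ, 0 < ε → ∃ x : ℕ → ℝ, x 0 = 0 ∧ StrictMono x ∧
      Tendsto x atTop atTop ∧
      Summable (fun k : ℕ => x (k + 1) * f (x k)) ∧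
      ∑' k : ℕ, x (k + 1) * f (x k) ≤ 4 * (∫ t in Set.Ici (0:ℝ), f t) + ε := by
  intro ε hε
  have hf (t : ℝ) (ht : t ∈ Set.Ici 0) : 0 ≤ f t := (hbd t ht).1
  have hpartial (n : ℕ) : ∑ k ∈ Finset.range n, geomPlan ε (k + 1) * f (geomPlan ε k)
      ≤ 4 * (∫ t in Set.Ici (0:ℝ), f t) + ε := by
    have := sum_range_mul_le_of_add_two_le hanti hf hint (geomPlan_zero ε)
      (geomPlan_strictMono hε).monotone (by norm_num) (geomPlan_add_two_le hε.le) n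
    rwa [geomPlan_one, hf0, mul_one, add_comm] at this
  have hsummable : Summable fun k => geomPlan ε (k + 1) * f (geomPlan ε k) :=
    summable_of_sum_range_le
      (fun k => mul_nonneg (geomPlan_nonneg hε _) (hf _ (geomPlan_nonneg hε _))) hpartial
  exact ⟨geomPlan ε, geomPlan_zero ε, geomPlan_strictMono hε, tendsto_geomPlan_atTop hε,
    hsummable, hsummable.tsum_le_of_sum_range_le hpartial⟩
end

section
/- For the Pareto tail distribution f(x) = x^{-α} for x ≥ 1 and f(x) = 1 for 0 ≤ x < 1, with α > 1, the sequence x_k = α^{k/(α-1)} satisfies the variational recursion x_{k+1} = (1/α) · x_k^{α+1} / x_{k-1}^α (with x_0 = 1), is strictly increasing, tends to infinity, and has cost Σ_{n=0}^∞ x_{n+1}/x_n^α = α^{α/(α-1)}/(α-1). -/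
open Filter

/-!
Writing `r = α ^ (α - 1)⁻¹`, the sequence is the geometric sequence `x k = r ^ k` with
`r > 1` and `r ^ (α - 1) = α`. Monotonicity and divergence are then those of `r ^ k`, the
recursion is an identity between exponents of `r`, and the `n`-th cost term
`r ^ (n + 1) / r ^ (n α)` equals `r * α⁻ⁿ`, so the cost is the geometric series
`r / (1 - α⁻¹) = α ^ (α / (α - 1)) / (α - 1)`.
-/

namespace Real

lemma rpow_natCast_div_eq_pow {a : ℝ} (ha : 0 ≤ a) (s : ℝ) (k : ℕ) :
    a ^ ((k : ℝ) / s) = (a ^ s⁻¹) ^ k := by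
  rw [div_eq_inv_mul, rpow_mul ha, rpow_natCast]

lemma pow_succ_eq_rpow_mul_pow_rpow_div_pow_rpow {r : ℝ} (hr : 0 < r) (p : ℝ) {k : ℕ}
    (hk : 1 ≤ k) :
    r ^ (k + 1) = r ^ (1 - p) * (r ^ k) ^ (p + 1) / (r ^ (k - 1)) ^ p := by
  rw [← rpow_natCast_mul hr.le, ← rpow_natCast_mul hr.le, ← rpow_add hr, ← rpow_sub hr,
    ← rpow_natCast]
  congr 1
  push_cast [Nat.cast_sub hk]
  ring

lemma pow_succ_div_pow_rpow {r : ℝ} (hr : 0 < r) (p : ℝ) (n : ℕ) :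
    r ^ (n + 1) / (r ^ n) ^ p = r * (r ^ (1 - p)) ^ n := by
  rw [← rpow_natCast_mul hr.le, ← rpow_mul_natCast hr.le, ← rpow_natCast, ← rpow_sub hr,
    mul_comm r, ← rpow_add_one hr.ne']
  congr 1
  push_cast
  ring

lemma hasSum_pow_succ_div_pow_rpow {r : ℝ} (hr : 0 < r) (p : ℝ) (h : r ^ (1 - p) < 1) :
    HasSum (fun n : ℕ => r ^ (n + 1) / (r ^ n) ^ p) (r * (1 - r ^ (1 - p))⁻¹) := by
  simp_rw [pow_succ_div_pow_rpow hr p]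
  exact (hasSum_geometric_of_lt_one (rpow_nonneg hr.le _) h).mul_left r

end Real

/-- For the Pareto tail f(x) = x^{-α} (x ≥ 1), α > 1, the sequence
x_k = α^{k/(α-1)} solves the variational recursion, is strictly increasing,
tends to infinity, and has cost α^{α/(α-1)}/(α-1). -/
theorem stmt5 (α : ℝ) (hα : 1 < α) :
    let x : ℕ → ℝ := fun k => α ^ ((k : ℝ) / (α - 1))
    x 0 = 1 ∧
    (∀ k : ℕ, 1 ≤ k → x (k + 1) = (1 / α) * x k ^ (α + 1) / x (k - 1) ^ α) ∧
    StrictMono x ∧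
    Tendsto x atTop atTop ∧
    ∑' n : ℕ, x (n + 1) / x n ^ α = α ^ (α / (α - 1)) / (α - 1) := by
  intro x
  have hα0 : 0 < α := by linarith
  have hα1 : α - 1 ≠ 0 := sub_ne_zero.2 hα.ne'
  set r := α ^ (α - 1)⁻¹ with hr_def
  have hr : 1 < r := Real.one_lt_rpow hα (inv_pos.2 (sub_pos.2 hα))
  have hr0 : 0 < r := zero_lt_one.trans hr
  have hrα : r ^ (1 - α) = 1 / α := by
    rw [← neg_sub, Real.rpow_neg hr0.le, Real.rpow_inv_rpow hα0.le hα1, one_div]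
  have hx : x = fun k => r ^ k := funext (Real.rpow_natCast_div_eq_pow hα0.le _)
  rw [hx]
  refine ⟨pow_zero r, fun k hk => ?_, pow_right_strictMono₀ hr,
    tendsto_pow_atTop_atTop_of_one_lt hr, ?_⟩
  · rw [← hrα]
    exact Real.pow_succ_eq_rpow_mul_pow_rpow_div_pow_rpow hr0 α hk
  · have hcost := Real.hasSum_pow_succ_div_pow_rpow hr0 α
      (by rw [hrα]; exact (div_lt_one hα0).2 hα)
    rw [hcost.tsum_eq, hrα, show α / (α - 1) = 1 + (α - 1)⁻¹ by field_simp; ring,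
      Real.rpow_add hα0, Real.rpow_one, ← hr_def]
    field_simp
end

section
/- For the Pareto recursion, setting r_k = x_k/x_{k-1} and w_k = r_k · α^{-1/(α-1)}, the recursion becomes w_{k+1} = w_k^α; the sequence (x_k) generated from x_0 = 1, x_1 = x is monotone increasing and unbounded if and only if x ≥ α^{1/(α-1)}, and among such values the minimal cost is achieved at x = α^{1/(α-1)}. -/
/-!
With `c = α^(-1/(α-1))` the rescaled ratios `w_k = (x_{k+1}/x_k)·c` satisfy `w_{k+1} = w_k^α`
(because `c^α = c/α`), so `w_k = (x c)^(α^k)`. If `x ≥ α^(1/(α-1)) = c⁻¹` then `w_k ≥ 1`, i.e.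
`x_{k+1} ≥ c⁻¹ x_k` with `c⁻¹ > 1`, giving geometric growth. If `x < c⁻¹` then `w_k → 0`,
so eventually `x_{k+1} < x_k`.
-/

open Filter

/-- The sequence generated by the Pareto variational recursion with
x_0 = 1, x_1 = x. -/
noncomputable def paretoSeq (α x : ℝ) : ℕ → ℝ
  | 0 => 1
  | 1 => x
  | (k + 2) => (1 / α) * paretoSeq α x (k + 1) ^ (α + 1) / paretoSeq α x k ^ α

open Real

section ParetoSeq

variable {α x : ℝ}

lemma paretoSeq_pos (hα : 0 < α) (hx : 0 < x) (k : ℕ) : 0 < paretoSeq α x k := by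
  induction k using Nat.strong_induction_on with
  | _ k ih =>
    match k, ih with
    | 0, _ => simp [paretoSeq]
    | 1, _ => simpa [paretoSeq] using hx
    | k + 2, ih =>
      have := ih k (by omega)
      have := ih (k + 1) (by omega)
      rw [paretoSeq]
      positivity

lemma paretoSeq_ratio_succ (hα : 0 < α) (hx : 0 < x) (k : ℕ) :
    paretoSeq α x (k + 2) / paretoSeq α x (k + 1) =
      (paretoSeq α x (k + 1) / paretoSeq α x k) ^ α / α := by
  have ha := paretoSeq_pos hα hx k
  have hb := paretoSeq_pos hα hx (k + 1)
  rw [paretoSeq, div_rpow hb.le ha.le, rpow_add_one hb.ne']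
  have := rpow_pos_of_pos ha α
  field_simp

lemma rpow_neg_one_div_sub_one_rpow (hα : 0 < α) (hα1 : α ≠ 1) :
    (α ^ (-(1 / (α - 1)))) ^ α = α ^ (-(1 / (α - 1))) / α := by
  have hexp : -(1 / (α - 1)) * α = -(1 / (α - 1)) - 1 := by
    field_simp [sub_ne_zero.mpr hα1]
    ring
  rw [← rpow_mul hα.le, hexp, rpow_sub_one hα.ne']

lemma paretoSeq_scaled_ratio_succ (hα : 0 < α) (hα1 : α ≠ 1) (hx : 0 < x) (k : ℕ) :
    paretoSeq α x (k + 2) / paretoSeq α x (k + 1) * α ^ (-(1 / (α - 1))) =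
      (paretoSeq α x (k + 1) / paretoSeq α x k * α ^ (-(1 / (α - 1)))) ^ α := by
  have hr := div_pos (paretoSeq_pos hα hx (k + 1)) (paretoSeq_pos hα hx k)
  rw [paretoSeq_ratio_succ hα hx, mul_rpow hr.le (rpow_nonneg hα.le _),
    rpow_neg_one_div_sub_one_rpow hα hα1]
  ring

lemma paretoSeq_scaled_ratio_eq (hα : 0 < α) (hα1 : α ≠ 1) (hx : 0 < x) (k : ℕ) :
    paretoSeq α x (k + 1) / paretoSeq α x k * α ^ (-(1 / (α - 1))) =
      (x * α ^ (-(1 / (α - 1)))) ^ (α ^ k) := by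
  induction k with
  | zero => simp [paretoSeq]
  | succ k ih =>
    rw [paretoSeq_scaled_ratio_succ hα hα1 hx, ih, ← rpow_mul (by positivity), ← pow_succ]

lemma paretoSeq_ratio_eq (hα : 0 < α) (hα1 : α ≠ 1) (hx : 0 < x) (k : ℕ) :
    paretoSeq α x (k + 1) / paretoSeq α x k =
      α ^ (1 / (α - 1)) * (x / α ^ (1 / (α - 1))) ^ (α ^ k) := by
  have hA := rpow_pos_of_pos hα (1 / (α - 1))
  have h := paretoSeq_scaled_ratio_eq hα hα1 hx k
  rw [rpow_neg hα.le, ← div_eq_mul_inv, ← div_eq_mul_inv, div_eq_iff hA.ne'] at h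
  rw [h, mul_comm]

lemma one_lt_rpow_one_div_sub_one (hα : 1 < α) : 1 < α ^ (1 / (α - 1)) :=
  one_lt_rpow hα (one_div_pos.mpr (sub_pos.mpr hα))

lemma strictMono_paretoSeq_and_tendsto_of_le (hα : 1 < α) (hx : α ^ (1 / (α - 1)) ≤ x) :
    StrictMono (paretoSeq α x) ∧ Tendsto (paretoSeq α x) atTop atTop := by
  set A := α ^ (1 / (α - 1))
  have hα0 : 0 < α := by linarith
  have hA : 1 < A := one_lt_rpow_one_div_sub_one hα
  have hx0 : 0 < x := by linarith
  have hpos := paretoSeq_pos hα0 hx0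
  have hgrowth : ∀ k, A * paretoSeq α x k ≤ paretoSeq α x (k + 1) := fun k => by
    have hratio : A ≤ paretoSeq α x (k + 1) / paretoSeq α x k := by
      rw [paretoSeq_ratio_eq hα0 hα.ne' hx0]
      exact le_mul_of_one_le_right (by linarith)
        (one_le_rpow ((one_le_div (by linarith)).mpr hx) (by positivity))
    rwa [le_div_iff₀ (hpos k)] at hratio
  refine ⟨strictMono_nat_of_lt_succ fun k => ?_, tendsto_atTop_of_geom_le (hpos 0) hA hgrowth⟩
  exact (lt_mul_of_one_lt_left (hpos k) hA).trans_le (hgrowth k)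

lemma le_of_strictMono_paretoSeq (hα : 1 < α) (hx : 0 < x) (hmono : StrictMono (paretoSeq α x)) :
    α ^ (1 / (α - 1)) ≤ x := by
  set A := α ^ (1 / (α - 1))
  have hα0 : 0 < α := by linarith
  have hA : 1 < A := one_lt_rpow_one_div_sub_one hα
  by_contra! hxA
  have hq0 : 0 < x / A := div_pos hx (by linarith)
  have hq1 : x / A < 1 := (div_lt_one (by linarith)).mpr hxA
  have hratio_lim : Tendsto (fun k : ℕ => A * (x / A) ^ (α ^ k)) atTop (nhds 0) := by
    simpa using ((tendsto_rpow_atTop_of_base_lt_one _ (by linarith) hq1).comp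
      (tendsto_pow_atTop_atTop_of_one_lt hα)).const_mul A
  obtain ⟨k, hk⟩ := (hratio_lim.eventually_lt_const one_pos).exists
  rw [← paretoSeq_ratio_eq hα0 hα.ne' hx, div_lt_one (paretoSeq_pos hα0 hx k)] at hk
  exact hk.not_gt (hmono k.lt_succ_self)

end ParetoSeq

/-- In ratio coordinates w_k = (x_k/x_{k-1})·α^{-1/(α-1)} the Pareto recursion
becomes w_{k+1} = w_k^α; the generated sequence is monotone increasing and
unbounded iff x ≥ α^{1/(α-1)}, and the cost x·α/(α-1) is minimal among such x
at x = α^{1/(α-1)}. -/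
theorem stmt7 (α : ℝ) (hα : 1 < α) (x : ℝ) (hx : 0 < x) :
    (∀ k : ℕ, 1 ≤ k →
      (paretoSeq α x (k + 1) / paretoSeq α x k) * α ^ (-(1 / (α - 1))) =
        ((paretoSeq α x k / paretoSeq α x (k - 1)) * α ^ (-(1 / (α - 1)))) ^ α) ∧
    ((StrictMono (paretoSeq α x) ∧ Tendsto (paretoSeq α x) atTop atTop) ↔
      α ^ (1 / (α - 1)) ≤ x) ∧
    (∀ x' : ℝ, α ^ (1 / (α - 1)) ≤ x' →
      α ^ (1 / (α - 1)) * (α / (α - 1)) ≤ x' * (α / (α - 1))) := by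
  refine ⟨fun k hk => ?_, ⟨fun h => le_of_strictMono_paretoSeq hα hx h.1,
    strictMono_paretoSeq_and_tendsto_of_le hα⟩, fun x' hx' => ?_⟩
  · obtain ⟨j, rfl⟩ : ∃ j, k = j + 1 := ⟨k - 1, by omega⟩
    exact paretoSeq_scaled_ratio_succ (by linarith) hα.ne' hx j
  · have : 0 < α - 1 := by linarith
    gcongr
end

section
/- Let f be Lipschitz with constant C_L and (x_k) a monotone sequence of turning points. If x_m < 1/(2 C_L), then the modified plan obtained by deleting all turning points x_j with j < m has strictly smaller cost: x_m + Σ_{k≥m} x_{k+1} f(x_k) < Σ over the full plan. -/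
/-!
Since `f 0 = 1` and `f` is `C`-Lipschitz, `f t ≥ 1 - C t`. Hence for `k < m`, where
`C x_{k+1} ≤ C x_m < 1/2`, the term `x_{k+1} f(x_k)` of the full plan exceeds `x_{k+1} - x_k`.
Summing over `k < m` telescopes to `x_m - x_0 < Σ_{k<m} x_{k+1} f(x_k)`, and the right-hand side
is exactly what the full plan pays beyond the modified one.
-/

open Finset

lemma LipschitzWith.sub_mul_abs_le {f : ℝ → ℝ} {K : NNReal} (hf : LipschitzWith K f) (a b : ℝ) :
    f a - K * |b - a| ≤ f b := by
  have h := hf.dist_le_mul b a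
  rw [Real.dist_eq, Real.dist_eq] at h
  linarith [neg_abs_le (f b - f a)]

lemma LipschitzWith.sub_lt_mul_apply {f : ℝ → ℝ} {K : NNReal} (hf : LipschitzWith K f)
    (hf0 : f 0 = 1) {a b : ℝ} (ha : 0 < a) (hb : 0 ≤ b) (hKb : K * b < 1) :
    b - a < b * f a := by
  have hfa : 1 - K * a ≤ f a := by
    simpa [hf0, abs_of_pos ha] using hf.sub_mul_abs_le 0 a
  calc b - a < b - K * b * a := by nlinarith
    _ = b * (1 - K * a) := by ring
    _ ≤ b * f a := mul_le_mul_of_nonneg_left hfa hb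

lemma sub_lt_sum_range_of_forall_lt {α : Type*} [AddCommGroup α] [PartialOrder α]
    [IsOrderedCancelAddMonoid α] {x g : ℕ → α} {m : ℕ} (hm : 0 < m)
    (h : ∀ k < m, x (k + 1) - x k < g k) :
    x m - x 0 < ∑ k ∈ range m, g k := by
  rw [← Finset.sum_range_sub]
  exact sum_lt_sum_of_nonempty (nonempty_range_iff.mpr hm.ne') fun k hk => h k (mem_range.mp hk)

theorem stmt8_general (f : ℝ → ℝ) (C : ℝ) (hC : 0 < C)
    (hlip : LipschitzWith (Real.toNNReal C) f)
    (hf0 : f 0 = 1)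
    (x : ℕ → ℝ) (hx0 : 0 < x 0) (hmono : StrictMono x)
    (m : ℕ) (hm : 1 ≤ m) (hxm : x m < 1 / (2 * C))
    (hsum : Summable fun k : ℕ => x (k + 1) * f (x k)) :
    x m + ∑' k : ℕ, x (m + k + 1) * f (x (m + k))
      < x 0 + ∑' k : ℕ, x (k + 1) * f (x k) := by
  have hpos : ∀ k, 0 < x k := fun k => hx0.trans_le (hmono.monotone k.zero_le)
  have hCxm : C * x m < 1 := by
    rw [lt_div_iff₀ (by positivity)] at hxm
    nlinarith [hpos m]
  have hstep : ∀ k < m, x (k + 1) - x k < x (k + 1) * f (x k) := fun k hk =>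
    hlip.sub_lt_mul_apply hf0 (hpos k) (hpos (k + 1)).le <| by
      rw [Real.coe_toNNReal C hC.le]
      nlinarith [hmono.monotone (Nat.succ_le_of_lt hk)]
  have hhead := sub_lt_sum_range_of_forall_lt hm hstep
  have hsplit := hsum.sum_add_tsum_nat_add m
  simp only [add_comm _ m] at hsplit
  linarith

/-- If f is Lipschitz with constant C and a turning point x_m satisfies
x_m < 1/(2C), then deleting all earlier turning points strictly decreases
the cost. Here x 0, x 1, ... are the (positive, strictly increasing)
turning points; the original cost is x 0 + Σ_{k≥0} x_{k+1} f(x_k) and the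
modified cost is x m + Σ_{k≥m} x_{k+1} f(x_k). -/
theorem stmt8 (f : ℝ → ℝ) (C : ℝ) (hC : 0 < C)
    (hlip : LipschitzWith (Real.toNNReal C) f)
    (hanti : AntitoneOn f (Set.Ici 0)) (hf0 : f 0 = 1)
    (hpos : ∀ t ∈ Set.Ici (0:ℝ), 0 < f t ∧ f t ≤ 1)
    (x : ℕ → ℝ) (hx0 : 0 < x 0) (hmono : StrictMono x)
    (m : ℕ) (hm : 1 ≤ m) (hxm : x m < 1 / (2 * C))
    (hsum : Summable fun k : ℕ => x (k + 1) * f (x k)) :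
    x m + ∑' k : ℕ, x (m + k + 1) * f (x (m + k))
      < x 0 + ∑' k : ℕ, x (k + 1) * f (x k) :=
  stmt8_general f C hC hlip hf0 x hx0 hmono m hm hxm hsum
end

section
/- For f(x) = 1 - √x on [0,1], for any strictly increasing sequence 0 < x_1 < x_2 < ... and any x_0 with 0 < x_0 < x_1^2, inserting x_0 before x_1 strictly decreases the cost: x_0 + x_1(1 - √x_0) < x_1. Hence no plan with a first turning point is optimal. -/
lemma add_mul_one_sub_sqrt_lt {a b : ℝ} (ha : 0 < a) (hb : 0 < b) (hab : a < b ^ 2) :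
    a + b * (1 - √a) < b := by
  have hsqrt_lt : √a < b := (Real.sqrt_lt' hb).mpr hab
  have hsaving : a < b * √a :=
    calc a = √a * √a := (Real.mul_self_sqrt ha.le).symm
      _ < b * √a := mul_lt_mul_of_pos_right hsqrt_lt (Real.sqrt_pos.mpr ha)
  linarith

/-- For the non-Lipschitz tail f(x) = 1 - √x on [0,1], inserting a point
x₀ with 0 < x₀ < x₁² before the first turning point x₁ strictly decreases
the cost; hence no plan with a first turning point is optimal. -/
theorem stmt9 :
    (∀ x0 x1 : ℝ, 0 < x0 → 0 < x1 → x1 ≤ 1 → x0 < x1 ^ 2 →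
      x0 + x1 * (1 - Real.sqrt x0) < x1) ∧
    (∀ x : ℕ → ℝ, StrictMono x → (∀ k, 0 < x k ∧ x k ≤ 1) →
      ∀ x0 : ℝ, 0 < x0 → x0 < (x 0) ^ 2 →
        x0 + x 0 * (1 - Real.sqrt x0)
            + ∑' k : ℕ, x (k + 1) * (1 - Real.sqrt (x k))
          < x 0 + ∑' k : ℕ, x (k + 1) * (1 - Real.sqrt (x k))) :=
  ⟨fun _ _ h0 h1 _ hlt => add_mul_one_sub_sqrt_lt h0 h1 hlt,
    fun _ _ hx _ h0 hlt => add_lt_add_left (add_mul_one_sub_sqrt_lt h0 (hx 0).1 hlt) _⟩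
end

section
/- For f(x) = e^{-x}, the map R(s,y) = (e^{-y}, s e^{y}) on (0,1) × (0,∞) preserves Lebesgue measure and has unique fixed point (s,y) = (e^{-1}, 1), which is elliptic: the eigenvalues of the differential of R at the fixed point are non-real and of modulus 1. -/
open MeasureTheory Real

/-
The recursion `R(s, y) = (e^{-y}, s e^y)` is injective with Jacobian matrix
`[[0, -e^{-y}], [e^y, s e^y]]`, whose determinant is `e^{-y} e^y = 1` everywhere, so the change
of variables formula shows that `R` preserves Lebesgue measure. A fixed point satisfies
`s = e^{-y}` and then `y = s e^y = 1`. At `(e^{-1}, 1)` the trace is `e^{-1} e = 1 ∈ (-2, 2)`.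
-/

theorem addHaar_image_eq_of_abs_det_fderiv_eq_one {E : Type*} [NormedAddCommGroup E]
    [NormedSpace ℝ E] [FiniteDimensional ℝ E] [MeasurableSpace E] [BorelSpace E]
    (μ : Measure E) [μ.IsAddHaarMeasure] {s : Set E} {f : E → E} {f' : E → E →L[ℝ] E}
    (hs : MeasurableSet s) (hf' : ∀ x ∈ s, HasFDerivWithinAt f (f' x) s x)
    (hdet : ∀ x ∈ s, |(f' x).det| = 1) (hf : Set.InjOn f s) :
    μ (f '' s) = μ s := by
  rw [← lintegral_abs_det_fderiv_eq_addHaar_image μ hs hf' hf,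
    setLIntegral_congr_fun hs fun x hx => by rw [hdet x hx, ENNReal.ofReal_one]]
  simp

noncomputable def expRecursion (p : ℝ × ℝ) : ℝ × ℝ :=
  (exp (-p.2), p.1 * exp p.2)

noncomputable def expRecursionDeriv (p : ℝ × ℝ) : (ℝ × ℝ) →L[ℝ] (ℝ × ℝ) :=
  (-exp (-p.2) • ContinuousLinearMap.snd ℝ ℝ ℝ).prod
    (exp p.2 • ContinuousLinearMap.fst ℝ ℝ ℝ + (p.1 * exp p.2) • ContinuousLinearMap.snd ℝ ℝ ℝ)

theorem hasFDerivAt_expRecursion (p : ℝ × ℝ) :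
    HasFDerivAt expRecursion (expRecursionDeriv p) p := by
  refine ((hasFDerivAt_snd (𝕜 := ℝ) (p := p)).neg.exp.prodMk
    ((hasFDerivAt_fst (𝕜 := ℝ) (p := p)).mul (hasFDerivAt_snd (p := p)).exp)).congr_fderiv ?_
  ext <;> simp [expRecursionDeriv]

theorem toMatrix_expRecursionDeriv (p : ℝ × ℝ) :
    LinearMap.toMatrix (Module.Basis.finTwoProd ℝ) (Module.Basis.finTwoProd ℝ)
        (expRecursionDeriv p).toLinearMap =
      !![0, -exp (-p.2); exp p.2, p.1 * exp p.2] := by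
  ext i j
  fin_cases i <;> fin_cases j <;> simp [LinearMap.toMatrix_apply, expRecursionDeriv]

theorem det_expRecursionDeriv (p : ℝ × ℝ) :
    LinearMap.det (expRecursionDeriv p).toLinearMap = 1 := by
  rw [← LinearMap.det_toMatrix (Module.Basis.finTwoProd ℝ), toMatrix_expRecursionDeriv,
    Matrix.det_fin_two_of, zero_mul, zero_sub, neg_mul, neg_neg, ← exp_add, neg_add_cancel,
    exp_zero]

theorem trace_expRecursionDeriv (p : ℝ × ℝ) :
    LinearMap.trace ℝ (ℝ × ℝ) (expRecursionDeriv p).toLinearMap = p.1 * exp p.2 := by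
  rw [LinearMap.trace_eq_matrix_trace ℝ (Module.Basis.finTwoProd ℝ), toMatrix_expRecursionDeriv,
    Matrix.trace_fin_two_of, zero_add]

theorem expRecursion_injective : Function.Injective expRecursion := by
  rintro ⟨s, y⟩ ⟨t, z⟩ h
  simp only [expRecursion, Prod.mk.injEq, neg_inj, exp_eq_exp] at h
  obtain ⟨rfl, h⟩ := h
  simpa using mul_right_cancel₀ (exp_ne_zero y) h

theorem volume_image_expRecursion {s : Set (ℝ × ℝ)} (hs : MeasurableSet s) :
    volume (expRecursion '' s) = volume s :=
  addHaar_image_eq_of_abs_det_fderiv_eq_one volume hs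
    (fun p _ => (hasFDerivAt_expRecursion p).hasFDerivWithinAt)
    (fun p _ => by rw [ContinuousLinearMap.det, det_expRecursionDeriv, abs_one])
    expRecursion_injective.injOn

theorem expRecursion_eq_self_iff (p : ℝ × ℝ) :
    expRecursion p = p ↔ p = (exp (-1), 1) := by
  obtain ⟨s, y⟩ := p
  simp only [expRecursion, Prod.mk.injEq]
  constructor
  · rintro ⟨rfl, hy⟩
    rw [← exp_add, neg_add_cancel, exp_zero] at hy
    exact ⟨by rw [← hy], hy.symm⟩
  · rintro ⟨rfl, rfl⟩
    simp [← exp_add]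

/-- For f(x) = e^{-x}, the map R(s,y) = (e^{-y}, s·e^y) preserves Lebesgue
measure on (0,1) × (0,∞) and has the unique fixed point (e^{-1}, 1) there,
which is elliptic: the Jacobian at the fixed point has determinant 1 and
trace in (-2,2) (complex conjugate eigenvalues of modulus 1). -/
theorem stmt11 :
    let F : ℝ × ℝ → ℝ × ℝ := fun p => (Real.exp (-p.2), p.1 * Real.exp p.2)
    (∀ s : Set (ℝ × ℝ), s ⊆ Set.Ioo (0:ℝ) 1 ×ˢ Set.Ioi (0:ℝ) →
      MeasurableSet s → volume (F '' s) = volume s) ∧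
    (∀ p ∈ Set.Ioo (0:ℝ) 1 ×ˢ Set.Ioi (0:ℝ),
      (F p = p ↔ p = (Real.exp (-1), 1))) ∧
    LinearMap.det (fderiv ℝ F (Real.exp (-1), 1)).toLinearMap = 1 ∧
    LinearMap.trace ℝ (ℝ × ℝ) (fderiv ℝ F (Real.exp (-1), 1)).toLinearMap
      ∈ Set.Ioo (-2 : ℝ) 2 := by
  intro F
  have hderiv : fderiv ℝ F (exp (-1), 1) = expRecursionDeriv (exp (-1), 1) :=
    (hasFDerivAt_expRecursion _).fderiv
  have hexp : exp (-1) * exp 1 = 1 := by rw [← exp_add, neg_add_cancel, exp_zero]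
  refine ⟨fun s _ hs => volume_image_expRecursion hs, fun p _ => expRecursion_eq_self_iff p,
    ?_, ?_⟩
  · rw [hderiv, det_expRecursionDeriv]
  · rw [hderiv, trace_expRecursionDeriv, hexp]
    norm_num
end

section
/- For f(x) = e^{-x}, if a strictly increasing solution (x_k) of the variational recursion x_{k+1} = e^{x_k - x_{k-1}} satisfies x_K > 1 for some K, then for all k > K, x_{k+1} - x_k = ln x_{k+2} ≥ ln x_K > 0, and hence the cost Σ_{k≥0} x_{k+1} e^{-x_k} converges. -/
/-!
The recursion says that each gap `x (k + 1) - x k` is `log (x (k + 2))`, so once `x K > 1` every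
later gap is at least `log (x K) > 0` by monotonicity. The `k + 1`-st cost term
`x (k + 2) * exp (-x (k + 1))` collapses to `exp (-x k)`, and gaps bounded below by a positive
constant make `exp (-x k)` decay geometrically.
-/

open Filter Real

theorem summable_exp_neg_of_eventually_le_sub {x : ℕ → ℝ} {c : ℝ} (hc : 0 < c)
    (h : ∀ᶠ k in atTop, c ≤ x (k + 1) - x k) : Summable fun k => exp (-x k) := by
  refine summable_of_ratio_norm_eventually_le (exp_lt_one_iff.mpr (neg_lt_zero.mpr hc)) ?_
  filter_upwards [h] with k hk
  rw [norm_of_nonneg (exp_nonneg _), norm_of_nonneg (exp_nonneg _), ← exp_add]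
  exact exp_le_exp.mpr (by linarith)

theorem mul_exp_neg_eq_exp_neg_of_eq_exp_sub {x : ℕ → ℝ} {k : ℕ}
    (h : x (k + 2) = exp (x (k + 1) - x k)) : x (k + 2) * exp (-x (k + 1)) = exp (-x k) := by
  rw [h, ← exp_add]
  ring_nf

theorem stmt12_general (x : ℕ → ℝ) (hmono : StrictMono x)
    (hrec : ∀ k : ℕ, 1 ≤ k → x (k + 1) = Real.exp (x k - x (k - 1)))
    (K : ℕ) (hK : 1 < x K) :
    (∀ k : ℕ, K < k →
      x (k + 1) - x k = Real.log (x (k + 2)) ∧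
      Real.log (x K) ≤ x (k + 1) - x k) ∧
    0 < Real.log (x K) ∧
    Summable (fun k : ℕ => x (k + 1) * Real.exp (-(x k))) := by
  have hrec' (k : ℕ) : x (k + 2) = exp (x (k + 1) - x k) := hrec (k + 1) le_add_self
  have hgap_eq (k : ℕ) : x (k + 1) - x k = log (x (k + 2)) := by rw [hrec', log_exp]
  have hgap_ge (k : ℕ) (hk : K < k) : log (x K) ≤ x (k + 1) - x k :=
    hgap_eq k ▸ log_le_log (by linarith) (hmono.monotone (by omega))
  refine ⟨fun k hk => ⟨hgap_eq k, hgap_ge k hk⟩, log_pos hK, ?_⟩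
  have hexp : Summable fun k => exp (-x k) :=
    summable_exp_neg_of_eventually_le_sub (log_pos hK) ((eventually_gt_atTop K).mono hgap_ge)
  refine (summable_nat_add_iff 1).mp ?_
  simpa only [mul_exp_neg_eq_exp_neg_of_eq_exp_sub (hrec' _)] using hexp

/-- For f(x) = e^{-x}: if a strictly increasing solution of the variational
recursion x_{k+1} = e^{x_k - x_{k-1}} has x_K > 1 for some K, then for all
k > K one has x_{k+1} - x_k = ln x_{k+2} ≥ ln x_K > 0, and the cost
Σ x_{k+1} e^{-x_k} converges. -/
theorem stmt12 (x : ℕ → ℝ) (hx0 : x 0 = 0) (hmono : StrictMono x)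
    (hrec : ∀ k : ℕ, 1 ≤ k → x (k + 1) = Real.exp (x k - x (k - 1)))
    (K : ℕ) (hK : 1 < x K) :
    (∀ k : ℕ, K < k →
      x (k + 1) - x k = Real.log (x (k + 2)) ∧
      Real.log (x K) ≤ x (k + 1) - x k) ∧
    0 < Real.log (x K) ∧
    Summable (fun k : ℕ => x (k + 1) * Real.exp (-(x k))) :=
  stmt12_general x hmono hrec K hK
end

section
/- The fixed point φ of the graph transform (the separatrix) satisfies the asymptotic expansion φ(y) = ln y + O(ln y / y) as y → ∞; specifically, |φ(y) - ln y| ≤ C ln y / y for some constant C and all sufficiently large y. -/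
/-!
Differentiating `φ (y - φ y) = log y` gives `φ'(y - φ y) (1 - φ' y) = 1 / y`, and since `φ' ≤ 1/2`
and `y ↦ y - φ y` is onto `[y₀, ∞)`, this yields `φ' z ≤ 2 / z`. Along the way `φ y ≤ 2 log y`, so
`y - φ y ≥ y / 2` for large `y`, and the mean value theorem on `[y - φ y, y]` gives
`0 ≤ φ y - log y = φ' c · φ y ≤ (4 / y) · 2 log y`.
-/

open Real Set Filter

namespace Separatrix

variable {φ : ℝ → ℝ} {y0 : ℝ}

theorem sub_le_half_of_deriv_le_half (hdiff : ∀ y ∈ Ici y0, DifferentiableAt ℝ φ y)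
    (hderiv : ∀ y ∈ Ici y0, deriv φ y ≤ 1 / 2) {a b : ℝ} (ha : y0 ≤ a) (hab : a ≤ b) :
    φ b - φ a ≤ (b - a) / 2 := by
  have hcont : ContinuousOn φ (Ici y0) := fun y hy => (hdiff y hy).continuousAt.continuousWithinAt
  have hdiffOn : DifferentiableOn ℝ φ (interior (Ici y0)) := fun y hy =>
    (hdiff y (interior_subset hy)).differentiableWithinAt
  have := (convex_Ici y0).image_sub_le_mul_sub_of_deriv_le hcont hdiffOn
    (fun y hy => hderiv y (interior_subset hy)) a ha b (ha.trans hab) hab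
  linarith

theorem exists_sub_self_eq (hdiff : ∀ y ∈ Ici y0, DifferentiableAt ℝ φ y)
    (hderiv : ∀ y ∈ Ici y0, deriv φ y ≤ 1 / 2) (hφ0 : 0 ≤ φ y0) {z : ℝ} (hz : y0 ≤ z) :
    ∃ y, y0 ≤ y ∧ y - φ y = z := by
  set b := z + (z - y0) + 2 * φ y0
  have hy0b : y0 ≤ b := by linarith
  have hcont : ContinuousOn (fun t => t - φ t) (Icc y0 b) := continuousOn_id.sub fun y hy =>
    (hdiff y hy.1).continuousAt.continuousWithinAt
  have hlip := sub_le_half_of_deriv_le_half hdiff hderiv le_rfl hy0b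
  have hzmem : z ∈ Icc (y0 - φ y0) (b - φ b) := ⟨by linarith, by linarith⟩
  obtain ⟨y, hy, hyz⟩ := intermediate_value_Icc hy0b hcont hzmem
  exact ⟨y, hy.1, hyz⟩

theorem deriv_sub_self_mul_one_sub_deriv (hdiff : ∀ y ∈ Ici y0, DifferentiableAt ℝ φ y)
    (heq : ∀ y ∈ Ici y0, φ (y - φ y) = log y) {y : ℝ} (hy : y0 < y) (hz : y0 ≤ y - φ y)
    (hy_ne : y ≠ 0) : deriv φ (y - φ y) * (1 - deriv φ y) = y⁻¹ := by
  have hcomp : HasDerivAt (fun t => φ (t - φ t)) (deriv φ (y - φ y) * (1 - deriv φ y)) y :=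
    (hdiff _ hz).hasDerivAt.comp y ((hasDerivAt_id y).sub (hdiff y hy.le).hasDerivAt)
  have hlog : (fun t => φ (t - φ t)) =ᶠ[nhds y] log := by
    filter_upwards [eventually_gt_nhds hy] with t ht using heq t ht.le
  exact hcomp.unique (hlog.hasDerivAt_iff.mpr (hasDerivAt_log hy_ne))

theorem deriv_le_two_div (hpos : ∀ y ∈ Ici y0, 0 < φ y)
    (hdiff : ∀ y ∈ Ici y0, DifferentiableAt ℝ φ y) (hderiv : ∀ y ∈ Ici y0, deriv φ y ≤ 1 / 2)
    (heq : ∀ y ∈ Ici y0, φ (y - φ y) = log y) {z : ℝ} (hz : y0 ≤ z) (hz0 : 0 < z) :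
    deriv φ z ≤ 2 / z := by
  obtain ⟨y, hy, rfl⟩ := exists_sub_self_eq hdiff hderiv (hpos y0 self_mem_Ici).le hz
  have hzy : y - φ y < y := sub_lt_self y (hpos y hy)
  have hkey := deriv_sub_self_mul_one_sub_deriv hdiff heq (hz.trans_lt hzy) hz (by linarith)
  have hhalf : 1 / 2 ≤ 1 - deriv φ y := by linarith [hderiv y hy]
  calc deriv φ (y - φ y) = y⁻¹ / (1 - deriv φ y) := by
        rw [← hkey, mul_div_cancel_right₀ _ (by linarith)]
    _ ≤ y⁻¹ / (1 / 2) := div_le_div_of_nonneg_left (inv_nonneg.2 (by linarith)) (by norm_num) hhalf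
    _ = 2 / y := by ring
    _ ≤ 2 / (y - φ y) := div_le_div_of_nonneg_left (by norm_num) hz0 hzy.le

theorem le_two_mul_log (hdiff : ∀ y ∈ Ici y0, DifferentiableAt ℝ φ y)
    (hderiv : ∀ y ∈ Ici y0, deriv φ y ≤ 1 / 2) (heq : ∀ y ∈ Ici y0, φ (y - φ y) = log y)
    {y : ℝ} (hy : y0 ≤ y) (hz : y0 ≤ y - φ y) (hφy : 0 ≤ φ y) : φ y ≤ 2 * log y := by
  have := sub_le_half_of_deriv_le_half hdiff hderiv hz (sub_le_self y hφy)
  rw [heq y hy] at this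
  linarith

theorem eventually_four_mul_log_le : ∀ᶠ y in atTop, 4 * log y ≤ y := by
  filter_upwards [isLittleO_log_id_atTop.bound (by norm_num : (0 : ℝ) < 1 / 4),
    eventually_ge_atTop 0] with y hy hy0
  rw [Real.norm_eq_abs, Real.norm_eq_abs, id, abs_of_nonneg hy0] at hy
  linarith [le_abs_self (log y)]

theorem eventually_abs_sub_log_le (hpos : ∀ y ∈ Ici y0, 0 < φ y)
    (hdiff : ∀ y ∈ Ici y0, DifferentiableAt ℝ φ y) (hderiv_pos : ∀ y ∈ Ici y0, 0 < deriv φ y)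
    (hderiv : ∀ y ∈ Ici y0, deriv φ y ≤ 1 / 2) (heq : ∀ y ∈ Ici y0, φ (y - φ y) = log y) :
    ∀ᶠ y in atTop, |φ y - log y| ≤ 8 * log y / y := by
  have hφ0 := hpos y0 self_mem_Ici
  filter_upwards [eventually_four_mul_log_le, eventually_ge_atTop (y0 + 2 * φ y0),
    eventually_gt_atTop 0] with y hlog hy hy_pos
  have hy0 : y0 ≤ y := by linarith
  have hφy := hpos y hy0
  have hz : y0 ≤ y - φ y := by
    linarith [sub_le_half_of_deriv_le_half hdiff hderiv le_rfl hy0]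
  have hφlog := le_two_mul_log hdiff hderiv heq hy0 hz hφy.le
  have hz_half : y / 2 ≤ y - φ y := by linarith
  obtain ⟨c, hc, hslope⟩ := exists_deriv_eq_slope φ (sub_lt_self y hφy)
    (fun t ht => (hdiff t (hz.trans ht.1)).continuousAt.continuousWithinAt)
    (fun t ht => (hdiff t (hz.trans ht.1.le)).differentiableWithinAt)
  have hsub : φ y - log y = deriv φ c * φ y := by
    rw [hslope, ← heq y hy0, sub_sub_cancel, div_mul_cancel₀ _ hφy.ne']
  have hc0 : y0 ≤ c := hz.trans hc.1.le
  have hc_pos : 0 < c := by linarith [hc.1]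
  have hderiv_c : deriv φ c ≤ 4 / y := calc
    deriv φ c ≤ 2 / c := deriv_le_two_div hpos hdiff hderiv heq hc0 hc_pos
    _ ≤ 2 / (y / 2) := div_le_div_of_nonneg_left (by norm_num) (by positivity) (by linarith [hc.1])
    _ = 4 / y := by ring
  have hnonneg : 0 ≤ deriv φ c * φ y := mul_nonneg (hderiv_pos c hc0).le hφy.le
  rw [hsub, abs_of_nonneg hnonneg]
  calc deriv φ c * φ y ≤ 4 / y * (2 * log y) :=
        mul_le_mul hderiv_c hφlog hφy.le (by positivity)
    _ = 8 * log y / y := by ring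

end Separatrix

theorem stmt16_general (y0 : ℝ) (φ : ℝ → ℝ)
    (hmem : ∀ y ∈ Set.Ici y0, 0 < φ y ∧ DifferentiableAt ℝ φ y ∧
      0 < deriv φ y ∧ deriv φ y ≤ 1 / 2)
    (heq : ∀ y ∈ Set.Ici y0, φ (y - φ y) = Real.log y) :
    ∃ C Y : ℝ, 0 ≤ C ∧ y0 ≤ Y ∧
      ∀ y ∈ Set.Ici Y, |φ y - Real.log y| ≤ C * Real.log y / y := by
  obtain ⟨Y, hY⟩ := eventually_atTop.1 <| Separatrix.eventually_abs_sub_log_le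
    (fun y hy => (hmem y hy).1) (fun y hy => (hmem y hy).2.1)
    (fun y hy => (hmem y hy).2.2.1) (fun y hy => (hmem y hy).2.2.2) heq
  exact ⟨8, max Y y0, by norm_num, le_max_right Y y0, fun y hy => hY y (le_of_max_le_left hy)⟩

/-- The separatrix φ, i.e. the solution of φ(y - φ(y)) = ln y with
0 < φ' ≤ 1/2, satisfies φ(y) = ln y + O(ln y / y) as y → ∞. -/
theorem stmt16 (y0 : ℝ) (hy0 : 4 < y0) (φ : ℝ → ℝ)
    (hmem : ∀ y ∈ Set.Ici y0, 0 < φ y ∧ DifferentiableAt ℝ φ y ∧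
      0 < deriv φ y ∧ deriv φ y ≤ 1 / 2)
    (heq : ∀ y ∈ Set.Ici y0, φ (y - φ y) = Real.log y) :
    ∃ C Y : ℝ, 0 ≤ C ∧ y0 ≤ Y ∧
      ∀ y ∈ Set.Ici Y, |φ y - Real.log y| ≤ C * Real.log y / y :=
  stmt16_general y0 φ hmem heq
end

section
/- The equation x = t - ln t has, for all sufficiently large x, a unique solution t(x) > x, and it satisfies t(x) = x + ln x + O(ln x / x). -/
/-!
Put `f t = t - log t`. From `log y < y - 1` for `y ≠ 1` one gets `log t - log s < (t - s) / s ≤ t - s`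
for `1 ≤ s < t`, so `f` is strictly increasing on `[1, ∞)`; since `f 1 = 1` and `f (2x) ≥ x`, the
intermediate value theorem gives the unique root `t > 1` of `f t = x` for every `x > 1`.
For the remainder `r = t - (x + log x) = log (t / x)` the same inequality gives
`r ≤ t / x - 1 = (log x + r) / x`, i.e. `r (x - 1) ≤ log x`.
-/

open Real Set

lemma strictMonoOn_sub_log : StrictMonoOn (fun t : ℝ => t - log t) (Ici 1) := by
  intro s (hs : 1 ≤ s) t _ hst
  have hs0 : 0 < s := by linarith
  have ht0 : 0 < t := by linarith
  have hlog : log (t / s) < t / s - 1 :=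
    log_lt_sub_one_of_pos (by positivity) (by rw [ne_eq, div_eq_one_iff_eq hs0.ne']; exact hst.ne')
  have hquot : t / s - 1 ≤ t - s := by
    rw [div_sub_one hs0.ne', div_le_iff₀ hs0]
    nlinarith
  rw [log_div (by positivity) hs0.ne'] at hlog
  dsimp only
  linarith

lemma continuousOn_sub_log_Ici_one : ContinuousOn (fun t : ℝ => t - log t) (Ici 1) :=
  continuousOn_id.sub <| continuousOn_log.mono fun y (hy : 1 ≤ y) => by
    simp only [mem_compl_iff, mem_singleton_iff]
    linarith

lemma existsUnique_sub_log_eq {x : ℝ} (hx : 1 < x) : ∃! t : ℝ, 1 < t ∧ t - log t = x := by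
  have hlog2x : log (2 * x) ≤ x := by
    rw [log_mul two_ne_zero (by linarith)]
    linarith [log_le_sub_one_of_pos (by linarith : 0 < x), log_two_lt_d9]
  obtain ⟨t, ⟨ht1, -⟩, hft⟩ := intermediate_value_Ioc (by linarith : (1 : ℝ) ≤ 2 * x)
    (continuousOn_sub_log_Ici_one.mono Icc_subset_Ici_self)
    (⟨by simpa using hx, by linarith⟩ : x ∈ Ioc (1 - log 1) (2 * x - log (2 * x)))
  refine ⟨t, ⟨ht1, hft⟩, fun s ⟨hs1, hfs⟩ => ?_⟩
  exact strictMonoOn_sub_log.injOn (mem_Ici.2 hs1.le) (mem_Ici.2 ht1.le) (hfs.trans hft.symm)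

section Remainder

variable {x t : ℝ} (ht : 1 < t) (h : t - log t = x)
include ht h

lemma lt_of_sub_log_eq : x < t := by
  linarith [log_pos ht]

lemma sub_add_log_nonneg_of_sub_log_eq : 0 ≤ t - (x + log x) := by
  have hx : 0 < x := by linarith [log_le_sub_one_of_pos (by linarith : 0 < t)]
  linarith [log_le_log hx (lt_of_sub_log_eq ht h).le]

lemma sub_add_log_mul_sub_one_le_of_sub_log_eq : (t - (x + log x)) * (x - 1) ≤ log x := by
  have ht0 : 0 < t := by linarith
  have hx : 0 < x := by linarith [log_le_sub_one_of_pos ht0]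
  have hlog : log (t / x) ≤ t / x - 1 := log_le_sub_one_of_pos (by positivity)
  rw [log_div (by positivity) hx.ne', div_sub_one hx.ne', le_div_iff₀ hx] at hlog
  nlinarith

end Remainder

/-- The equation x = t - ln t has, for all sufficiently large x, a unique
solution t(x) > 1, satisfying t(x) > x and t(x) = x + ln x + O(ln x / x). -/
theorem stmt17 :
    ∃ X C : ℝ, 0 ≤ C ∧ ∀ x : ℝ, X ≤ x →
      (∃! t : ℝ, 1 < t ∧ t - Real.log t = x) ∧
      (∀ t : ℝ, 1 < t → t - Real.log t = x →
        x < t ∧ |t - (x + Real.log x)| ≤ C * Real.log x / x) := by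
  refine ⟨2, 2, zero_le_two, fun x hx => ⟨existsUnique_sub_log_eq (by linarith), fun t ht h => ?_⟩⟩
  refine ⟨lt_of_sub_log_eq ht h, ?_⟩
  have hr_nonneg := sub_add_log_nonneg_of_sub_log_eq ht h
  have hr_le := sub_add_log_mul_sub_one_le_of_sub_log_eq ht h
  rw [abs_of_nonneg hr_nonneg, le_div_iff₀ (by linarith)]
  nlinarith
end

section
/- If a sequence satisfies x_{n+1} = x_n + ln x_n + O(ln x_n / x_n) with x_1 sufficiently large, then x_n = n(ln n + ln ln n) + r_n where the remainder satisfies |r_{n+1} - r_n| ≤ C for some constant C; in particular x_n / (n ln n) → 1. -/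
/-!
Put `e n = x (n + 1) - x n - log (x n)`; as `log x / x → 0`, `e n → 0`. Both maps
`y ↦ y + log y ± 1` are monotone, so `x` can be compared with a supersolution `A n log n` of the
first and with a time-shifted subsolution `m log m / 2` of the second: eventually
`n log n / 8 ≤ x n ≤ A n log n`, i.e. `log (x n) = log n + log log n + O(1)`. With
`r n = x n - n (log n + log log n)`,
`r (n + 1) - r n = e n + (log (x n) - log n - log log n) - (n + 1) Δ(log n + log log n)`,
and all three terms are eventually bounded; as `C` may depend on `x`, this suffices. Summing,
`r n = O(n) = o(n log n)`, which gives `x n / (n log n) → 1`.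
-/

open Filter Real Set Asymptotics Topology

noncomputable def logAddLogLog (t : ℝ) : ℝ := log t + log (log t)

lemma log_sub_log_le_div {a b : ℝ} (ha : 0 < a) (hb : 0 < b) : log b - log a ≤ (b - a) / a := by
  have h := log_le_sub_one_of_pos (div_pos hb ha)
  rwa [log_div hb.ne' ha.ne', div_sub_one ha.ne'] at h

lemma succ_mul_log_succ_sub_log_le {t : ℝ} (ht : 1 ≤ t) :
    (t + 1) * (log (t + 1) - log t) ≤ 2 :=
  calc (t + 1) * (log (t + 1) - log t) ≤ (t + 1) * ((t + 1 - t) / t) := by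
        gcongr; exact log_sub_log_le_div (by linarith) (by linarith)
    _ = 1 + 1 / t := by field_simp; ring
    _ ≤ 2 := by linarith [(div_le_one (by linarith : (0:ℝ) < t)).2 ht]

lemma succ_mul_log_succ_sub_mul_log_le {t : ℝ} (ht : 1 ≤ t) :
    (t + 1) * log (t + 1) - t * log t ≤ log t + 2 := by
  linarith [succ_mul_log_succ_sub_log_le ht]

lemma log_le_succ_mul_log_succ_sub_mul_log {t : ℝ} (ht : 0 < t) :
    log t ≤ (t + 1) * log (t + 1) - t * log t := by
  have : log t ≤ log (t + 1) := log_le_log ht (by linarith)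
  nlinarith

lemma mul_mul_log_add_log_add_one_le {A t : ℝ} (hA : 3 ≤ A) (ht : 0 < t) (hlog : 2 ≤ log t) :
    A * (t * log t) + log (A * (t * log t)) + 1 ≤ A * ((t + 1) * log (t + 1)) := by
  have hloglog : log (log t) ≤ log t - 1 := log_le_sub_one_of_pos (by linarith)
  have hlogA : log A ≤ A - 1 := log_le_sub_one_of_pos (by linarith)
  have hstep := log_le_succ_mul_log_succ_sub_mul_log ht
  rw [log_mul (by positivity) (by positivity), log_mul ht.ne' (by positivity)]
  nlinarith [mul_nonneg (by linarith : (0:ℝ) ≤ A - 2) (by linarith : (0:ℝ) ≤ log t - 2)]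

lemma succ_mul_log_succ_div_two_le {t : ℝ} (ht : 0 < t) (hlog : 6 ≤ log t) :
    (t + 1) * log (t + 1) / 2 ≤ t * log t / 2 + log (t * log t / 2) - 1 := by
  have ht1 : 1 < t := (log_pos_iff ht.le).1 (by linarith)
  have hloglog : 0 ≤ log (log t) := log_nonneg (by linarith)
  have hlog2 : log 2 ≤ 1 := by linarith [log_le_sub_one_of_pos (by norm_num : (0:ℝ) < 2)]
  have hstep := succ_mul_log_succ_sub_mul_log_le ht1.le
  rw [log_div (by positivity) two_ne_zero, log_mul ht.ne' (by positivity)]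
  linarith

lemma abs_succ_mul_logAddLogLog_succ_sub_le {t : ℝ} (ht : 0 < t) (hlog : 1 ≤ log t) :
    |(t + 1) * (logAddLogLog (t + 1) - logAddLogLog t)| ≤ 4 := by
  have ht1 : 1 < t := (log_pos_iff ht.le).1 (by linarith)
  have h1 : log t ≤ log (t + 1) := log_le_log ht (by linarith)
  have h2 : log (log t) ≤ log (log (t + 1)) := log_le_log (by linarith) h1
  have h3 : log (log (t + 1)) - log (log t) ≤ log (t + 1) - log t :=
    calc log (log (t + 1)) - log (log t) ≤ (log (t + 1) - log t) / log t :=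
          log_sub_log_le_div (by linarith) (by linarith)
      _ ≤ log (t + 1) - log t := div_le_self (by linarith) hlog
  have h4 := succ_mul_log_succ_sub_log_le ht1.le
  unfold logAddLogLog
  rw [abs_le]
  constructor <;> nlinarith

lemma le_of_le_of_recurrence {s : Set ℝ} {φ : ℝ → ℝ} (hφ : MonotoneOn φ s) {x y : ℕ → ℝ}
    {N : ℕ} (hxs : ∀ n ≥ N, x n ∈ s) (hys : ∀ n ≥ N, y n ∈ s) (hN : x N ≤ y N)
    (hx : ∀ n ≥ N, x (n + 1) ≤ φ (x n)) (hy : ∀ n ≥ N, φ (y n) ≤ y (n + 1)) :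
    ∀ n ≥ N, x n ≤ y n := by
  intro n hn
  induction n, hn using Nat.le_induction with
  | base => exact hN
  | succ n hn ih => exact (hx n hn).trans ((hφ (hxs n hn) (hys n hn) ih).trans (hy n hn))

lemma monotoneOn_add_log_add (c : ℝ) : MonotoneOn (fun t => t + log t + c) (Ioi 0) :=
  fun a ha _ _ hab => by have := log_le_log ha hab; dsimp only; linarith

lemma mul_log_div_four_le_half_mul_log_half {t : ℝ} (ht : 4 ≤ t) :
    t * log t / 4 ≤ t / 2 * log (t / 2) := by
  have hlog : 2 * log 2 ≤ log t := by
    have h := log_le_log (by norm_num) (show (2 : ℝ) ^ 2 ≤ t by linarith)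
    rwa [log_pow, Nat.cast_two] at h
  rw [log_div (by positivity) two_ne_zero]
  nlinarith

lemma tendsto_log_natCast_atTop : Tendsto (fun n : ℕ => log (n : ℝ)) atTop atTop :=
  tendsto_log_atTop.comp tendsto_natCast_atTop_atTop

lemma isBigO_succ_mul_logAddLogLog_succ_sub :
    (fun n : ℕ => ((n : ℝ) + 1) * (logAddLogLog ((n : ℝ) + 1) - logAddLogLog n))
      =O[atTop] (fun _ => (1 : ℝ)) := by
  refine IsBigO.of_bound 4 ?_
  filter_upwards [tendsto_log_natCast_atTop.eventually_ge_atTop 1, eventually_gt_atTop 0]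
    with n hlog hn
  rw [norm_one, mul_one, Real.norm_eq_abs]
  exact abs_succ_mul_logAddLogLog_succ_sub_le (by exact_mod_cast hn) hlog

lemma tendsto_sub_sub_log_of_abs_le {x : ℕ → ℝ} {C' : ℝ} (hxtop : Tendsto x atTop atTop)
    (hrec : ∀ᶠ n in atTop, |x (n + 1) - x n - log (x n)| ≤ C' * log (x n) / x n) :
    Tendsto (fun n => x (n + 1) - x n - log (x n)) atTop (𝓝 0) := by
  have hbound : Tendsto (fun n => C' * log (x n) / x n) atTop (𝓝 0) := by
    have := ((isLittleO_log_id_atTop.tendsto_div_nhds_zero).comp hxtop).const_mul C'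
    simpa [mul_div_assoc] using this
  exact squeeze_zero_norm' (by simpa only [Real.norm_eq_abs] using hrec) hbound

lemma isBigO_natCast_of_abs_sub_le {r : ℕ → ℝ} {C : ℝ}
    (h : ∀ n, |r (n + 1) - r n| ≤ C) :
    r =O[atTop] (fun n => (n : ℝ)) := by
  have hC : 0 ≤ C := (abs_nonneg _).trans (h 0)
  have hdrift : ∀ n : ℕ, |r n - r 0| ≤ C * n := by
    intro n
    induction n with
    | zero => simp
    | succ n ih =>
      push_cast
      linarith [abs_sub_le (r (n + 1)) (r n) (r 0), h n]
  refine IsBigO.of_bound (|r 0| + C) ?_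
  filter_upwards [eventually_ge_atTop 1] with n hn
  have hn1 : (1 : ℝ) ≤ n := by exact_mod_cast hn
  rw [Real.norm_eq_abs, Real.norm_eq_abs, Nat.abs_cast]
  nlinarith [abs_sub_abs_le_abs_sub (r n) (r 0), hdrift n, abs_nonneg (r 0)]

lemma tendsto_div_mul_log_of_isBigO {x : ℕ → ℝ}
    (hr : (fun n => x n - n * logAddLogLog n) =O[atTop] (fun n => (n : ℝ))) :
    Tendsto (fun n => x n / (n * log n)) atTop (𝓝 1) := by
  have hloglog : Tendsto (fun n : ℕ => log (log n) / log n) atTop (𝓝 0) :=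
    (isLittleO_log_id_atTop.comp_tendsto tendsto_log_natCast_atTop).tendsto_div_nhds_zero
  have hlin : (fun n : ℕ => (n : ℝ)) =o[atTop] (fun n => n * log n) := by
    simpa using (isBigO_refl (fun n : ℕ => (n : ℝ)) atTop).mul_isLittleO
      ((isLittleO_one_left_iff ℝ).2 (tendsto_norm_atTop_atTop.comp tendsto_log_natCast_atTop))
  have hsum := (hloglog.const_add 1).add (hr.trans_isLittleO hlin).tendsto_div_nhds_zero
  rw [add_zero, add_zero] at hsum
  refine hsum.congr' ?_
  filter_upwards [tendsto_log_natCast_atTop.eventually_gt_atTop 0, eventually_gt_atTop 0]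
    with n hlog hn
  have hn0 : (n : ℝ) ≠ 0 := by exact_mod_cast hn.ne'
  unfold logAddLogLog
  field_simp
  ring

section Recurrence

variable {x : ℕ → ℝ} (hx : ∀ n, 0 < x n)
  (herr : Tendsto (fun n => x (n + 1) - x n - log (x n)) atTop (𝓝 0))

include herr in
lemma eventually_abs_sub_sub_log_le_one :
    ∀ᶠ n in atTop, |x (n + 1) - x n - log (x n)| ≤ 1 := by
  filter_upwards [(Metric.tendsto_nhds.1 herr) 1 one_pos] with n hn
  rw [Real.dist_eq, sub_zero] at hn
  exact hn.le

include hx herr in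
lemma exists_eventually_le_mul_mul_log :
    ∃ A, ∀ᶠ n : ℕ in atTop, x n ≤ A * (n * log n) := by
  obtain ⟨N, hN⟩ := eventually_atTop.1 ((eventually_abs_sub_sub_log_le_one herr).and
    ((tendsto_log_natCast_atTop.eventually_ge_atTop 2).and (eventually_ge_atTop 1)))
  have hpos : ∀ n ≥ N, (0 : ℝ) < n := fun n hn => Nat.cast_pos.2 (hN n hn).2.2
  have hY : ∀ n ≥ N, (0 : ℝ) < n * log n := fun n hn =>
    mul_pos (hpos n hn) (by linarith [(hN n hn).2.1])
  set A := max 3 (x N / (N * log N))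
  have hA : 0 < A := by positivity
  refine ⟨A, eventually_atTop.2 ⟨N, le_of_le_of_recurrence (monotoneOn_add_log_add 1)
    (y := fun n : ℕ => A * (n * log n)) (fun n _ => hx n)
    (fun n hn => mul_pos hA (hY n hn)) ?_ (fun n hn => ?_) (fun n hn => ?_)⟩⟩
  · rw [← div_le_iff₀ (hY N le_rfl)]; exact le_max_right _ _
  · linarith [(abs_le.1 (hN n hn).1).2]
  · push_cast
    exact mul_mul_log_add_log_add_one_le (le_max_left _ _) (hpos n hn) (hN n hn).2.1

include hx herr in
lemma eventually_mul_log_div_eight_le (hxtop : Tendsto x atTop atTop) :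
    ∀ᶠ n : ℕ in atTop, (n : ℝ) * log n / 8 ≤ x n := by
  obtain ⟨N, hN⟩ := eventually_atTop.1 ((eventually_abs_sub_sub_log_le_one herr).and
    (hxtop.eventually_ge_atTop (3 * exp 6)))
  -- A subsolution `c n log n` cannot be started at an arbitrary time `N`; shifted in time,
  -- `m log m / 2` with `m = n - N + exp 6` can.
  set m : ℕ → ℝ := fun n => n - N + exp 6 with hm
  have hm6 : ∀ n ≥ N, exp 6 ≤ m n := fun n hn => by
    have : (N : ℝ) ≤ n := by exact_mod_cast hn
    simp only [hm]; linarith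
  have hmpos : ∀ n ≥ N, 0 < m n := fun n hn => (exp_pos 6).trans_le (hm6 n hn)
  have hlogm : ∀ n ≥ N, 6 ≤ log (m n) := fun n hn =>
    (le_log_iff_exp_le (hmpos n hn)).2 (hm6 n hn)
  have hsub : ∀ n ≥ N, m n * log (m n) / 2 ≤ x n := by
    refine le_of_le_of_recurrence (monotoneOn_add_log_add (-1))
      (x := fun n => m n * log (m n) / 2) (fun n hn => ?_) (fun n _ => hx n) ?_
      (fun n hn => ?_) (fun n hn => ?_)
    · have := hmpos n hn; have := hlogm n hn; simp only [mem_Ioi]; positivity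
    · simp only [hm, sub_self, zero_add, log_exp]; linarith [(hN N le_rfl).2]
    · have hsucc : m (n + 1) = m n + 1 := by simp only [hm]; push_cast; ring
      simp only [hsucc]
      linarith [succ_mul_log_succ_div_two_le (hmpos n hn) (hlogm n hn)]
    · linarith [(abs_le.1 (hN n hn).1).1]
  filter_upwards [eventually_ge_atTop (max (2 * N) 4)] with n hn
  have hn4 : (4 : ℝ) ≤ n := by exact_mod_cast (le_max_right _ _).trans hn
  have hnN : 2 * (N : ℝ) ≤ n := by exact_mod_cast (le_max_left _ _).trans hn
  have hnm : n / 2 ≤ m n := by simp only [hm]; linarith [exp_pos 6]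
  calc (n : ℝ) * log n / 8 = n * log n / 4 / 2 := by ring
    _ ≤ n / 2 * log (n / 2) / 2 := by gcongr; exact mul_log_div_four_le_half_mul_log_half hn4
    _ ≤ m n * log (m n) / 2 := by
      have he : exp (-1) ≤ 1 := exp_le_one_iff.2 (by norm_num)
      gcongr ?_ / 2
      exact mul_log_strictMonoOn.monotoneOn (mem_Ici.2 (by linarith))
        (mem_Ici.2 (by linarith)) hnm
    _ ≤ x n := hsub n (by exact_mod_cast (by omega : N ≤ n))

include hx herr in
lemma isBigO_log_sub_logAddLogLog (hxtop : Tendsto x atTop atTop) :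
    (fun n => log (x n) - logAddLogLog n) =O[atTop] (fun _ => (1 : ℝ)) := by
  obtain ⟨A, hA⟩ := exists_eventually_le_mul_mul_log hx herr
  refine IsBigO.of_bound (max |log (1 / 8)| |log A|) ?_
  filter_upwards [hA, eventually_mul_log_div_eight_le hx herr hxtop,
    tendsto_log_natCast_atTop.eventually_gt_atTop 0, eventually_gt_atTop 0] with n hup hlo hlog hn
  have hY : 0 < (n : ℝ) * log n := mul_pos (by exact_mod_cast hn) hlog
  have hq : 0 < x n / (n * log n) := div_pos (hx n) hY
  have hsplit : log (x n) - logAddLogLog n = log (x n / (n * log n)) := by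
    rw [log_div (hx n).ne' hY.ne', log_mul (by exact_mod_cast hn.ne') hlog.ne']; rfl
  rw [hsplit, norm_one, mul_one, Real.norm_eq_abs]
  refine abs_le_max_abs_abs (log_le_log (by norm_num) ?_) (log_le_log hq ?_)
  · rw [le_div_iff₀ hY]; linarith
  · rwa [div_le_iff₀ hY]

include hx herr in
lemma isBigO_remainder_succ_sub (hxtop : Tendsto x atTop atTop) :
    (fun n : ℕ => (x (n + 1) - ((n : ℝ) + 1) * logAddLogLog ((n : ℝ) + 1))
      - (x n - n * logAddLogLog n)) =O[atTop] (fun _ => (1 : ℝ)) :=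
  (((herr.isBigO_one ℝ).add (isBigO_log_sub_logAddLogLog hx herr hxtop)).sub
    isBigO_succ_mul_logAddLogLog_succ_sub).congr_left fun n => by ring

end Recurrence

theorem stmt18_general (C' : ℝ) :
    ∃ M : ℝ, ∀ x : ℕ → ℝ, (∀ n, 0 < x n) → M ≤ x 1 →
      Tendsto x atTop atTop →
      (∀ n : ℕ, 1 ≤ n →
        |x (n + 1) - x n - Real.log (x n)| ≤ C' * Real.log (x n) / x n) →
      ∃ C : ℝ,
        (∀ n : ℕ, 1 ≤ n →
          |(x (n + 1) - ((n : ℝ) + 1) *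
              (Real.log ((n : ℝ) + 1) + Real.log (Real.log ((n : ℝ) + 1))))
            - (x n - (n : ℝ) * (Real.log (n : ℝ) + Real.log (Real.log (n : ℝ))))|
            ≤ C) ∧
        Tendsto (fun n : ℕ => x n / ((n : ℝ) * Real.log (n : ℝ))) atTop (nhds 1) := by
  refine ⟨0, fun x hx _ hxtop hrec => ?_⟩
  have herr := tendsto_sub_sub_log_of_abs_le hxtop (eventually_atTop.2 ⟨1, hrec⟩)
  obtain ⟨C, hC⟩ := isBigO_one_nat_atTop_iff.1 (isBigO_remainder_succ_sub hx herr hxtop)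
  simp only [Real.norm_eq_abs] at hC
  refine ⟨C, fun n _ => hC n, tendsto_div_mul_log_of_isBigO ?_⟩
  exact isBigO_natCast_of_abs_sub_le (C := C) fun n => by push_cast; exact hC n

/-- If a sequence satisfies x_{n+1} = x_n + ln x_n + O(ln x_n / x_n) with x_1
sufficiently large, then x_n = n(ln n + ln ln n) + r_n with |r_{n+1} - r_n| ≤ C;
in particular x_n/(n ln n) → 1. -/
theorem stmt18 (C' : ℝ) (hC' : 0 ≤ C') :
    ∃ M : ℝ, ∀ x : ℕ → ℝ, (∀ n, 0 < x n) → M ≤ x 1 →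
      Tendsto x atTop atTop →
      (∀ n : ℕ, 1 ≤ n →
        |x (n + 1) - x n - Real.log (x n)| ≤ C' * Real.log (x n) / x n) →
      ∃ C : ℝ,
        (∀ n : ℕ, 1 ≤ n →
          |(x (n + 1) - ((n : ℝ) + 1) *
              (Real.log ((n : ℝ) + 1) + Real.log (Real.log ((n : ℝ) + 1))))
            - (x n - (n : ℝ) * (Real.log (n : ℝ) + Real.log (Real.log (n : ℝ))))|
            ≤ C) ∧
        Tendsto (fun n : ℕ => x n / ((n : ℝ) * Real.log (n : ℝ))) atTop (nhds 1) :=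
  stmt18_general C'
end
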